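/- Let W₁, …, Wₙ be i.i.d. centered Gaussian random variables with variance σ², independent of a random vector (A₁, …, Aₙ) of square-integrable real random variables with E[Aⱼ²] = v for all j, and let p₁, …, pₙ be real constants. Let Z = ∑ⱼ pⱼ Wⱼ Aⱼ. Then E[(max(0, Z))²] = (σ²/2)·v·∑ⱼ pⱼ². In particular, if σ² = 2/(∑ⱼ pⱼ²) (with not all pⱼ zero), then E[(max(0, Z))²] = v. -/

import Mathlib

open MeasureTheory ProbabilityTheory
open scoped NNReal

/-!
Since `max 0 z ^ 2 + max 0 (-z) ^ 2 = z ^ 2`, any square-integrable `Z` with the same law as `-Z`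
satisfies `E[max 0 Z ^ 2] = E[Z ^ 2] / 2`. The pre-activation `Z = ∑ j, p j * W j * A j` is such a
variable: flipping the sign of the Gaussian weights does not change the joint law of `(W, A)`.
Finally the terms of `Z` are orthogonal in `L²` because the weights are independent and centered,
so `E[Z ^ 2] = ∑ j, p j ^ 2 * E[W j ^ 2] * E[A j ^ 2] = s * v * ∑ j, p j ^ 2`.
-/

section

variable {Ω : Type*} [MeasurableSpace Ω] {μ : Measure Ω}

lemma max_zero_sq_add_max_zero_neg_sq (z : ℝ) : max 0 z ^ 2 + max 0 (-z) ^ 2 = z ^ 2 := by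
  rcases le_total 0 z with h | h <;> simp [h]

lemma MeasureTheory.MemLp.integrable_max_zero_sq {Z : Ω → ℝ} (hZ : MemLp Z 2 μ) :
    Integrable (fun ω => max 0 (Z ω) ^ 2) μ := by
  refine hZ.integrable_sq.mono'
    (((continuous_const.max continuous_id).pow 2).comp_aestronglyMeasurable hZ.1)
    (ae_of_all _ fun ω => ?_)
  rcases le_total 0 (Z ω) with h | h <;> simp [h, sq_nonneg]

lemma integral_max_zero_sq_of_identDistrib_neg {Z : Ω → ℝ} (hZ : MemLp Z 2 μ)
    (hsymm : IdentDistrib Z (-Z) μ μ) :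
    ∫ ω, max 0 (Z ω) ^ 2 ∂μ = (∫ ω, Z ω ^ 2 ∂μ) / 2 := by
  have hflip : ∫ ω, max 0 (Z ω) ^ 2 ∂μ = ∫ ω, max 0 (-Z ω) ^ 2 ∂μ :=
    (hsymm.comp (u := fun z : ℝ => max 0 z ^ 2) (by fun_prop)).integral_eq
  have hsum : ∫ ω, max 0 (Z ω) ^ 2 ∂μ + ∫ ω, max 0 (-Z ω) ^ 2 ∂μ = ∫ ω, Z ω ^ 2 ∂μ := by
    rw [← integral_add hZ.integrable_max_zero_sq (g := fun ω => max 0 (-Z ω) ^ 2)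
      hZ.neg.integrable_max_zero_sq]
    simp_rw [max_zero_sq_add_max_zero_neg_sq]
  linarith

lemma identDistrib_neg_of_odd [IsFiniteMeasure μ] {E F : Type*} [MeasurableSpace E]
    [MeasurableSpace F] [Neg E] [MeasurableNeg E] {X : Ω → E} {Y : Ω → F}
    (hX : IdentDistrib X (-X) μ μ) (hY : AEMeasurable Y μ) (hXY : X ⟂ᵢ[μ] Y)
    {f : E × F → ℝ} (hf : Measurable f) (hodd : ∀ x y, f (-x, y) = -f (x, y)) :
    IdentDistrib (fun ω => f (X ω, Y ω)) (-fun ω => f (X ω, Y ω)) μ μ := by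
  have hpair := hX.prodMk (.refl hY) hXY (hXY.comp measurable_neg measurable_id)
  have hneg : (-fun ω => f (X ω, Y ω)) = f ∘ fun ω => ((-X) ω, Y ω) :=
    funext fun ω => (hodd _ _).symm
  rw [hneg]
  exact hpair.comp hf

lemma identDistrib_neg_of_iIndepFun_gaussianReal {ι : Type*} [Countable ι] {W : ι → Ω → ℝ}
    {s : ℝ≥0} (hW : ∀ i, HasLaw (W i) (gaussianReal 0 s) μ) (hind : iIndepFun W μ) :
    IdentDistrib (fun ω i => W i ω) (fun ω i => -W i ω) μ μ :=
  IdentDistrib.pi (fun i => ⟨(hW i).aemeasurable, (hW i).aemeasurable.neg,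
      ((hW i).map_eq.trans (by rw [neg_zero])).trans (gaussianReal_neg (hW i)).map_eq.symm⟩)
    hind (hind.comp (fun _ => Neg.neg) fun _ => measurable_neg)

lemma ProbabilityTheory.HasLaw.memLp_two_of_gaussianReal {X : Ω → ℝ} {m : ℝ} {s : ℝ≥0}
    (hX : HasLaw X (gaussianReal m s) μ) : MemLp X 2 μ := by
  have h : MemLp id 2 (μ.map X) := hX.map_eq ▸ memLp_id_gaussianReal 2
  exact (memLp_map_measure_iff aestronglyMeasurable_id hX.aemeasurable).1 h

lemma ProbabilityTheory.HasLaw.integral_eq_zero_of_gaussianReal {X : Ω → ℝ} {s : ℝ≥0}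
    (hX : HasLaw X (gaussianReal 0 s) μ) : ∫ ω, X ω ∂μ = 0 := by
  rw [hX.integral_eq, integral_id_gaussianReal]

lemma ProbabilityTheory.HasLaw.integral_sq_of_gaussianReal {X : Ω → ℝ} {s : ℝ≥0}
    (hX : HasLaw X (gaussianReal 0 s) μ) : ∫ ω, X ω ^ 2 ∂μ = s := by
  rw [← variance_of_integral_eq_zero hX.aemeasurable hX.integral_eq_zero_of_gaussianReal,
    hX.variance_eq, variance_id_gaussianReal]

lemma integral_sq_sum_of_pairwise_integral_mul_eq_zero {ι : Type*} (t : Finset ι)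
    {X : ι → Ω → ℝ} (hX : ∀ i, MemLp (X i) 2 μ)
    (horth : Pairwise fun i j => ∫ ω, X i ω * X j ω ∂μ = 0) :
    ∫ ω, (∑ i ∈ t, X i ω) ^ 2 ∂μ = ∑ i ∈ t, ∫ ω, X i ω ^ 2 ∂μ := by
  classical
  have hint : ∀ i j, Integrable (fun ω => X i ω * X j ω) μ :=
    fun i j => (hX i).integrable_mul (hX j)
  simp_rw [sq, Finset.sum_mul_sum]
  rw [integral_finsetSum _ fun i _ => integrable_finsetSum _ fun j _ => hint i j]
  refine Finset.sum_congr rfl fun i hi => ?_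
  rw [integral_finsetSum _ fun j _ => hint i j,
    Finset.sum_eq_single_of_mem i hi fun j _ hji => horth hji.symm]

lemma ProbabilityTheory.IndepFun.memLp_two_mul {X Y : Ω → ℝ} (hXY : X ⟂ᵢ[μ] Y)
    (hX : MemLp X 2 μ) (hY : MemLp Y 2 μ) : MemLp (fun ω => X ω * Y ω) 2 μ := by
  refine (memLp_two_iff_integrable_sq (hX.1.mul hY.1)).2 ?_
  simp_rw [Pi.mul_apply, mul_pow]
  exact (hXY.comp (measurable_id.pow_const 2) (measurable_id.pow_const 2)).integrable_mul
    hX.integrable_sq hY.integrable_sq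

section WeightedSum

variable {ι : Type*} {W A : ι → Ω → ℝ}

lemma memLp_two_const_mul_mul (p : ι → ℝ) (hW : ∀ j, MemLp (W j) 2 μ)
    (hA : ∀ j, MemLp (A j) 2 μ) (hWA : (fun ω j => W j ω) ⟂ᵢ[μ] (fun ω j => A j ω)) (j : ι) :
    MemLp (fun ω => p j * W j ω * A j ω) 2 μ := by
  convert ((hWA.comp (measurable_pi_apply j) (measurable_pi_apply j)).memLp_two_mul
    (hW j) (hA j)).const_mul (p j) using 1
  ext ω
  simp only [Function.comp_apply]
  ring

lemma integral_sq_sum_const_mul_mul [Fintype ι] (p : ι → ℝ) {s v : ℝ}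
    (hW : ∀ j, MemLp (W j) 2 μ) (hWmean : ∀ j, ∫ ω, W j ω ∂μ = 0)
    (hWsq : ∀ j, ∫ ω, W j ω ^ 2 ∂μ = s) (hWindep : Pairwise fun j k => W j ⟂ᵢ[μ] W k)
    (hA : ∀ j, MemLp (A j) 2 μ) (hAsq : ∀ j, ∫ ω, A j ω ^ 2 ∂μ = v)
    (hWA : (fun ω j => W j ω) ⟂ᵢ[μ] (fun ω j => A j ω)) :
    ∫ ω, (∑ j, p j * W j ω * A j ω) ^ 2 ∂μ = s * v * ∑ j, p j ^ 2 := by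
  have hfactor : ∀ j k, ∫ ω, p j * W j ω * A j ω * (p k * W k ω * A k ω) ∂μ
      = p j * p k * ((∫ ω, W j ω * W k ω ∂μ) * ∫ ω, A j ω * A k ω ∂μ) := by
    intro j k
    have hind : (fun ω => W j ω * W k ω) ⟂ᵢ[μ] (fun ω => A j ω * A k ω) :=
      hWA.comp ((measurable_pi_apply j).mul (measurable_pi_apply k))
        ((measurable_pi_apply j).mul (measurable_pi_apply k))
    rw [← hind.integral_fun_mul_eq_mul_integral ((hW j).1.mul (hW k).1)
      ((hA j).1.mul (hA k).1), ← integral_const_mul]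
    congr 1 with ω
    ring
  have horth : Pairwise fun j k =>
      ∫ ω, p j * W j ω * A j ω * (p k * W k ω * A k ω) ∂μ = 0 := by
    intro j k hjk
    rw [hfactor, (hWindep hjk).integral_fun_mul_eq_mul_integral (hW j).1 (hW k).1, hWmean,
      zero_mul, zero_mul, mul_zero]
  rw [integral_sq_sum_of_pairwise_integral_mul_eq_zero _
    (memLp_two_const_mul_mul p hW hA hWA) horth, Finset.mul_sum]
  refine Finset.sum_congr rfl fun j _ => ?_
  simp_rw [sq, hfactor, ← sq, hWsq, hAsq]
  ring

end WeightedSum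

end

theorem relu_preactivation_second_moment_general
    {Ω : Type*} [MeasurableSpace Ω] (μ : Measure Ω) [IsProbabilityMeasure μ]
    {n : ℕ} (W A : Fin n → Ω → ℝ) (p : Fin n → ℝ) (s : NNReal) (v : ℝ)
    (hWmeas : ∀ j, Measurable (W j))
    (hWdist : ∀ j, μ.map (W j) = gaussianReal 0 s)
    (hWindep : iIndepFun W μ)
    (hAL2 : ∀ j, MemLp (A j) 2 μ)
    (hAmom : ∀ j, ∫ ω, (A j ω) ^ 2 ∂μ = v)
    (hWA : IndepFun (fun ω (j : Fin n) => W j ω) (fun ω (j : Fin n) => A j ω) μ) :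
    (∫ ω, (max 0 (∑ j, p j * W j ω * A j ω)) ^ 2 ∂μ = ((s : ℝ) / 2) * v * ∑ j, (p j) ^ 2)
    ∧ ((∃ j, p j ≠ 0) → (s : ℝ) = 2 / ∑ j, (p j) ^ 2 →
        ∫ ω, (max 0 (∑ j, p j * W j ω * A j ω)) ^ 2 ∂μ = v) := by
  have hW : ∀ j, HasLaw (W j) (gaussianReal 0 s) μ :=
    fun j => ⟨(hWmeas j).aemeasurable, hWdist j⟩
  have hWL2 : ∀ j, MemLp (W j) 2 μ := fun j => (hW j).memLp_two_of_gaussianReal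
  have hZL2 : MemLp (fun ω => ∑ j, p j * W j ω * A j ω) 2 μ :=
    memLp_finsetSum _ fun j _ => memLp_two_const_mul_mul p hWL2 hAL2 hWA j
  have hZsymm : IdentDistrib (fun ω => ∑ j, p j * W j ω * A j ω)
      (-fun ω => ∑ j, p j * W j ω * A j ω) μ μ :=
    identDistrib_neg_of_odd (identDistrib_neg_of_iIndepFun_gaussianReal hW hWindep)
      (aemeasurable_pi_lambda _ fun j => (hAL2 j).aemeasurable) hWA
      (f := fun q => ∑ j, p j * q.1 j * q.2 j) (by fun_prop)
      (fun _ _ => by simp [Finset.sum_neg_distrib])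
  have hZsq := integral_sq_sum_const_mul_mul p hWL2
    (fun j => (hW j).integral_eq_zero_of_gaussianReal)
    (fun j => (hW j).integral_sq_of_gaussianReal)
    (fun _ _ hjk => hWindep.indepFun hjk) hAL2 hAmom hWA
  have key : ∫ ω, (max 0 (∑ j, p j * W j ω * A j ω)) ^ 2 ∂μ
      = ((s : ℝ) / 2) * v * ∑ j, (p j) ^ 2 := by
    rw [integral_max_zero_sq_of_identDistrib_neg hZL2 hZsymm, hZsq]
    ring
  refine ⟨key, fun ⟨j, hj⟩ hs => ?_⟩
  have hpos : 0 < ∑ j, p j ^ 2 :=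
    Finset.sum_pos' (fun i _ => sq_nonneg _) ⟨j, Finset.mem_univ j, by positivity⟩
  rw [key, hs]
  field_simp

/-- ReLU case of Theorem 3.1: with i.i.d. centered Gaussian weights of variance `s`,
independent of activations with common second moment `v`, the second moment of the ReLU of
the rescaled pre-activation `Z = ∑ j, p j * W j * A j` is `(s / 2) * v * ∑ j, (p j)^2`;
in particular, choosing `s = 2 / ∑ j, (p j)^2` makes it equal to `v`. -/
theorem relu_preactivation_second_moment
    {Ω : Type*} [MeasurableSpace Ω] (μ : Measure Ω) [IsProbabilityMeasure μ]
    {n : ℕ} (W A : Fin n → Ω → ℝ) (p : Fin n → ℝ) (s : NNReal) (v : ℝ)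
    (hWmeas : ∀ j, Measurable (W j)) (hAmeas : ∀ j, Measurable (A j))
    (hWdist : ∀ j, μ.map (W j) = gaussianReal 0 s)
    (hWindep : iIndepFun W μ)
    (hAL2 : ∀ j, MemLp (A j) 2 μ)
    (hAmom : ∀ j, ∫ ω, (A j ω) ^ 2 ∂μ = v)
    (hWA : IndepFun (fun ω (j : Fin n) => W j ω) (fun ω (j : Fin n) => A j ω) μ) :
    (∫ ω, (max 0 (∑ j, p j * W j ω * A j ω)) ^ 2 ∂μ = ((s : ℝ) / 2) * v * ∑ j, (p j) ^ 2)
    ∧ ((∃ j, p j ≠ 0) → (s : ℝ) = 2 / ∑ j, (p j) ^ 2 →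
        ∫ ω, (max 0 (∑ j, p j * W j ω * A j ω)) ^ 2 ∂μ = v) :=
  relu_preactivation_second_moment_general μ W A p s v hWmeas hWdist hWindep hAL2 hAmom hWA
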